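/- Let x be an oscillatory solution of x'(t) = p(t)·x(τ̄(t)) with |p| ≡ 1 and τ_m := sup_{t ≥ t₀}(t - τ̄(t)) ∈ (1/e, 2]. If t₁ ≥ t₀ + τ_m + ϱ(τ_m) is a point with x(t₁) = 0 and M₀ := max{|x(v)| : v ∈ [t₁ - τ_m - ϱ(τ_m), t₁]}, then |x(t)| ≤ M₀·ψ_{τ_m}(t - t₁) for all t ≥ t₁, and |x(t)| ≤ M₀·x_{τ_m}(ϱ(τ_m) - (t₁ - t)) for all t ∈ [t₁ - τ_m, t₁]. -/

import Mathlib

open Real MeasureTheory Filter Set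

noncomputable section

/-- `x` is the solution of `x'(t) = -x(t-τ)` with `x ≡ 1` on `(-∞,0]`:
`x(t) = 1 - ∫_0^t x(s-τ) ds` for `t ≥ 0`. -/
def IsXSol (τ : ℝ) (x : ℝ → ℝ) : Prop :=
  Continuous x ∧ (∀ t ≤ (0:ℝ), x t = 1) ∧
    ∀ t ≥ (0:ℝ), x t = 1 - ∫ s in (0:ℝ)..t, x (s - τ)

/-- The first positive root of a function. -/
noncomputable def firstRoot (x : ℝ → ℝ) : ℝ := sInf {t : ℝ | 0 < t ∧ x t = 0}

/-- `ψ` is the solution of `ψ'(t) = max{x_τ(ϱ(τ)+t-τ), ψ(t)}` on `[0,τ]`,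
`ψ'(t) = ψ(t)` on `[τ,∞)`, `ψ(0) = 0`. -/
def IsPsiSol (τ ρ : ℝ) (xτ ψ : ℝ → ℝ) : Prop :=
  ContinuousOn ψ (Ici (0:ℝ)) ∧ ψ 0 = 0 ∧
    (∀ t ∈ Icc (0:ℝ) τ, ψ t = ∫ s in (0:ℝ)..t, max (xτ (ρ + s - τ)) (ψ s)) ∧
    (∀ t ≥ τ, ψ t = ψ τ + ∫ s in τ..t, ψ s)

/-- A (continuous, integrated-form) solution of the delay equation
`x'(t) = p(t) x(τ̄(t))` on `[t₀,∞)`. -/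
def IsDelaySolution (p τd : ℝ → ℝ) (t₀ : ℝ) (x : ℝ → ℝ) : Prop :=
  Continuous x ∧ ∀ t ≥ t₀, x t = x t₀ + ∫ s in t₀..t, p s * x (τd s)

/-- `x` is `α`-oscillating: eventually every interval on which `x` has no zero
has length at most `α`. -/
def AlphaOscillating (α : ℝ) (x : ℝ → ℝ) : Prop :=
  ∃ T : ℝ, ∀ a b : ℝ, T ≤ a → a < b → (∀ t ∈ Ioo a b, x t ≠ 0) → b - a ≤ α

/-- `x` is oscillatory: it has arbitrarily large zeros. -/
def Oscillatory (x : ℝ → ℝ) : Prop := ∀ T : ℝ, ∃ t ≥ T, x t = 0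

open Topology
open scoped Nat

/-!
Backwards from the zero `t₁`: `|x v| ≤ ∫_v^{t₁} |x(τ̄ s)| ds ≤ ∫_v^{t₁} F(s - τ) ds` for every
antitone majorant `F` of `|x|`, so `|x|` lies below an antitone fixed point `F` of
`F ↦ min M₀ (∫_v^{t₁} F(s - τ) ds)` that also lies above `M₀ x_τ(ϱ - (t₁ - v))`. Such a fixed point equals `M₀` up to the last point `a` with
`∫_a^{t₁} F(s - τ) ds = M₀` and then solves `F' = -F(· - τ)`, so it is `M₀ x_τ(· - a)`; it
vanishes at `t₁`, and minimality of the root `ϱ` forces `a = t₁ - ϱ`.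

Forwards from `t₁`: `|x(τ̄ s)|` is at most `M₀ ψ'(s - t₁)` plus the running maximum `D` of the
defect `|x| - M₀ ψ(· - t₁)`; integrating gives `D t ≤ ∫_{t₁}^t D`, so `D = 0` by Gronwall.
-/

theorem le_mul_pow_div_factorial_of_le_integral {D : ℝ → ℝ} {a T : ℝ}
    (hD : MonotoneOn D (Icc a T)) (h : ∀ t ∈ Icc a T, D t ≤ ∫ s in a..t, D s) (n : ℕ) :
    ∀ t ∈ Icc a T, D t ≤ D T * (t - a) ^ n / n ! := by
  induction n with
  | zero =>
    intro t ht
    simpa using hD ht ⟨ht.1.trans ht.2, le_rfl⟩ ht.2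
  | succ n ih =>
    intro t ht
    have hDint : IntervalIntegrable D volume a t :=
      (hD.mono (by rw [uIcc_of_le ht.1]; exact Icc_subset_Icc_right ht.2)).intervalIntegrable
    calc D t ≤ ∫ s in a..t, D s := h t ht
      _ ≤ ∫ s in a..t, D T * (s - a) ^ n / n ! :=
        intervalIntegral.integral_mono_on ht.1 hDint
          (Continuous.intervalIntegrable (by fun_prop) _ _) fun s hs =>
          ih s ⟨hs.1, hs.2.trans ht.2⟩
      _ = D T * (t - a) ^ (n + 1) / (n + 1)! := by
        rw [intervalIntegral.integral_div, intervalIntegral.integral_const_mul,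
          intervalIntegral.integral_comp_sub_right (fun s => s ^ n), integral_pow,
          Nat.factorial_succ]
        push_cast
        field_simp
        ring

theorem nonpos_of_le_integral {D : ℝ → ℝ} {a : ℝ} (hD : MonotoneOn D (Ici a))
    (h : ∀ t ≥ a, D t ≤ ∫ s in a..t, D s) : ∀ t ≥ a, D t ≤ 0 := by
  intro T hT
  have hle := fun n => le_mul_pow_div_factorial_of_le_integral (hD.mono Icc_subset_Ici_self)
    (fun t ht => h t ht.1) n T ⟨hT, le_rfl⟩
  have hlim : Tendsto (fun n : ℕ => D T * (T - a) ^ n / n !) atTop (𝓝 0) := by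
    simpa [mul_div_assoc] using
      (FloorSemiring.tendsto_pow_div_factorial_atTop (T - a)).const_mul (D T)
  exact ge_of_tendsto' hlim hle

theorem nonpos_of_le_integral_of_majorant {E : ℝ → ℝ} {a : ℝ} (hE : ContinuousOn E (Ici a))
    (h : ∀ D : ℝ → ℝ, MonotoneOn D (Ici a) → (∀ t, 0 ≤ D t) →
      (∀ t ≥ a, ∀ u ∈ Icc a t, E u ≤ D t) → ∀ t ≥ a, E t ≤ ∫ s in a..t, D s) :
    ∀ t ≥ a, E t ≤ 0 := by
  set D : ℝ → ℝ := fun t => max (sSup (E '' Icc a t)) 0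
  have hbdd : ∀ t, BddAbove (E '' Icc a t) := fun t =>
    isCompact_Icc.bddAbove_image (hE.mono Icc_subset_Ici_self)
  have hmaj : ∀ t ≥ a, ∀ u ∈ Icc a t, E u ≤ D t := fun t _ u hu =>
    (le_csSup (hbdd t) (mem_image_of_mem E hu)).trans (le_max_left _ _)
  have hD : MonotoneOn D (Ici a) := fun s hs t _ hst =>
    max_le_max_right 0 (csSup_le_csSup (hbdd t) ⟨E a, mem_image_of_mem E ⟨le_rfl, hs⟩⟩
      (image_mono (Icc_subset_Icc_right hst)))
  have hD0 : ∀ t, 0 ≤ D t := fun t => le_max_right _ _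
  have hE_le := h D hD hD0 hmaj
  have hD_le : ∀ t ≥ a, D t ≤ ∫ s in a..t, D s := by
    intro t ht
    have hint : IntervalIntegrable D volume a t :=
      (hD.mono (by rw [uIcc_of_le ht]; exact Icc_subset_Ici_self)).intervalIntegrable
    refine max_le (csSup_le ⟨E a, mem_image_of_mem E ⟨le_rfl, ht⟩⟩ ?_)
      (intervalIntegral.integral_nonneg ht fun s _ => hD0 s)
    rintro _ ⟨u, hu, rfl⟩
    exact (hE_le u hu.1).trans
      (intervalIntegral.integral_mono_interval le_rfl hu.1 hu.2 (ae_of_all _ hD0) hint)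
  exact fun t ht => (hmaj t ht t ⟨ht, le_rfl⟩).trans (nonpos_of_le_integral hD hD_le t ht)

theorem firstRoot_nonneg (f : ℝ → ℝ) : 0 ≤ firstRoot f :=
  Real.sInf_nonneg fun _ ht => ht.1.le

theorem firstRoot_le {f : ℝ → ℝ} {t : ℝ} (ht : 0 < t) (hft : f t = 0) : firstRoot f ≤ t :=
  csInf_le ⟨0, fun _ hs => hs.1.le⟩ ⟨ht, hft⟩

theorem apply_firstRoot_eq_zero {f : ℝ → ℝ} (hf : Continuous f) (h : 0 < firstRoot f) :
    f (firstRoot f) = 0 := by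
  -- `sInf ∅ = 0`, so a positive `firstRoot` comes from a nonempty set of roots.
  have hne : {t : ℝ | 0 < t ∧ f t = 0}.Nonempty := by
    by_contra hemp
    simp [firstRoot, not_nonempty_iff_eq_empty.1 hemp] at h
  exact closure_minimal (fun t ht => ht.2) (isClosed_eq hf continuous_const)
    (csInf_mem_closure hne ⟨0, fun _ hs => hs.1.le⟩)

theorem pos_of_lt_firstRoot {f : ℝ → ℝ} (hf : Continuous f) (h0 : 0 < f 0) {t : ℝ}
    (ht0 : 0 ≤ t) (ht : t < firstRoot f) : 0 < f t := by
  by_contra! hft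
  obtain ⟨r, hr, hfr⟩ := intermediate_value_Icc' ht0 hf.continuousOn ⟨hft, h0.le⟩
  have hr0 : 0 < r := hr.1.lt_of_ne (by rintro rfl; exact h0.ne' hfr)
  exact ((firstRoot_le hr0 hfr).trans hr.2).not_gt ht

theorem nonneg_of_le_firstRoot {f : ℝ → ℝ} (hf : Continuous f) (h0 : 0 < f 0) {t : ℝ}
    (ht0 : 0 ≤ t) (ht : t ≤ firstRoot f) : 0 ≤ f t := by
  rcases ht.lt_or_eq with ht | rfl
  · exact (pos_of_lt_firstRoot hf h0 ht0 ht).le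
  rcases ht0.lt_or_eq with hpos | hzero
  · exact (apply_firstRoot_eq_zero hf hpos).ge
  · rw [← hzero]; exact h0.le

theorem eqOn_Iic_of_delayed {F G : ℝ → ℝ} {τ a T : ℝ} (hτ : 0 < τ) (h₀ : EqOn F G (Iic a))
    (h : ∀ v ≤ T, EqOn F G (Iic (v - τ)) → F v = G v) : EqOn F G (Iic T) := by
  have hstep : ∀ n : ℕ, ∀ v ≤ T, v ≤ a + n * τ → F v = G v := by
    intro n
    induction n with
    | zero => exact fun v _ hv => h₀ (by simpa using hv)
    | succ n ih =>
      refine fun v hvT hv => h v hvT fun u hu => ih u (by linarith [mem_Iic.1 hu]) ?_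
      push_cast at hv
      linarith [mem_Iic.1 hu]
  intro v hv
  obtain ⟨n, hn⟩ := exists_nat_ge ((v - a) / τ)
  exact hstep n v hv (by rw [div_le_iff₀ hτ] at hn; linarith)

namespace IsXSol

variable {τ : ℝ} {x : ℝ → ℝ}

theorem apply_max_zero (h : IsXSol τ x) (t : ℝ) : x (max t 0) = x t := by
  rcases le_total t 0 with ht | ht
  · rw [max_eq_right ht, h.2.1 0 le_rfl, h.2.1 t ht]
  · rw [max_eq_left ht]

theorem sub_eq_integral (h : IsXSol τ x) {a b : ℝ} (ha : 0 ≤ a) (hb : 0 ≤ b) :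
    x a - x b = ∫ s in a..b, x (s - τ) := by
  have hint : ∀ c d : ℝ, IntervalIntegrable (fun s => x (s - τ)) volume c d := fun c d =>
    (h.1.comp (continuous_sub_right τ)).intervalIntegrable c d
  rw [h.2.2 a ha, h.2.2 b hb, ← intervalIntegral.integral_interval_sub_left (hint 0 b) (hint 0 a)]
  ring

theorem nonneg_of_le_firstRoot (h : IsXSol τ x) {t : ℝ} (ht : t ≤ firstRoot x) : 0 ≤ x t := by
  rw [← h.apply_max_zero]
  exact _root_.nonneg_of_le_firstRoot h.1 (by rw [h.2.1 0 le_rfl]; exact one_pos)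
    (le_max_right _ _) (max_le ht (firstRoot_nonneg x))

theorem antitoneOn_Iic_firstRoot (h : IsXSol τ x) (hτ : 0 ≤ τ) :
    AntitoneOn x (Iic (firstRoot x)) := by
  intro a _ b hb hab
  rw [← h.apply_max_zero a, ← h.apply_max_zero b]
  have hab' : max a 0 ≤ max b 0 := max_le_max_right 0 hab
  have hint : 0 ≤ ∫ s in max a 0..max b 0, x (s - τ) :=
    intervalIntegral.integral_nonneg hab' fun s hs =>
      h.nonneg_of_le_firstRoot (by linarith [hs.2, max_le hb (firstRoot_nonneg x)])
  linarith [h.sub_eq_integral (le_max_right a 0) (le_max_right b 0)]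

theorem le_one_of_le_firstRoot (h : IsXSol τ x) (hτ : 0 ≤ τ) {t : ℝ} (ht : t ≤ firstRoot x) :
    x t ≤ 1 := by
  rw [← h.2.1 (min t 0) (min_le_right t 0)]
  exact h.antitoneOn_Iic_firstRoot hτ ((min_le_left t 0).trans ht) ht (min_le_left t 0)

theorem le_integral_firstRoot (h : IsXSol τ x) (hτ : 0 ≤ τ) (hρ : 0 < firstRoot x) {a : ℝ}
    (ha : a ≤ firstRoot x) : x a ≤ ∫ s in a..firstRoot x, x (s - τ) := by
  have hint : IntervalIntegrable (fun s => x (s - τ)) volume a (firstRoot x) :=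
    (h.1.comp (continuous_sub_right τ)).intervalIntegrable _ _
  calc x a = ∫ s in max a 0..firstRoot x, x (s - τ) := by
        rw [← h.apply_max_zero, ← h.sub_eq_integral (le_max_right a 0) hρ.le,
          apply_firstRoot_eq_zero h.1 hρ, sub_zero]
    _ ≤ ∫ s in a..firstRoot x, x (s - τ) :=
        intervalIntegral.integral_mono_interval (le_max_left a 0) (max_le ha hρ.le) le_rfl
          ((ae_restrict_mem measurableSet_Ioc).mono fun s hs =>
            h.nonneg_of_le_firstRoot (by linarith [hs.2])) hint

theorem mul_eq_sub_integral (h : IsXSol τ x) (M a : ℝ) {v : ℝ} (hv : a ≤ v) :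
    M * x (v - a) = M - ∫ s in a..v, M * x (s - τ - a) := by
  have hshift : ∫ s in a..v, x (s - τ - a) = ∫ r in 0..v - a, x (r - τ) := by
    simp_rw [sub_right_comm _ τ a]
    rw [intervalIntegral.integral_comp_sub_right (fun r => x (r - τ)), sub_self]
  rw [intervalIntegral.integral_const_mul, hshift, h.2.2 _ (sub_nonneg.2 hv)]
  ring

end IsXSol

def psiDeriv (τ ρ : ℝ) (xτ ψ : ℝ → ℝ) (r : ℝ) : ℝ :=
  if r ≤ τ then max (xτ (ρ + r - τ)) (ψ r) else ψ r

theorem le_psiDeriv (τ ρ : ℝ) (xτ ψ : ℝ → ℝ) (r : ℝ) : ψ r ≤ psiDeriv τ ρ xτ ψ r := by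
  unfold psiDeriv
  split_ifs
  exacts [le_max_right _ _, le_rfl]

namespace IsPsiSol

variable {τ ρ : ℝ} {xτ ψ : ℝ → ℝ}

theorem intervalIntegrable_psiDeriv (h : IsPsiSol τ ρ xτ ψ) (hxτ : Continuous xτ) {a b : ℝ}
    (ha : 0 ≤ a) (hab : a ≤ b) : IntervalIntegrable (psiDeriv τ ρ xτ ψ) volume a b := by
  have hleft : ∀ c d, 0 ≤ c → c ≤ d → d ≤ τ →
      IntervalIntegrable (psiDeriv τ ρ xτ ψ) volume c d := fun c d hc hcd hd => by
    refine ContinuousOn.intervalIntegrable_of_Icc hcd (ContinuousOn.congr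
      (f := fun r => max (xτ (ρ + r - τ)) (ψ r)) ?_ fun r hr => if_pos (hr.2.trans hd))
    exact ContinuousOn.sup (hxτ.comp ((continuous_const_add ρ).sub continuous_const)).continuousOn
      (h.1.mono fun r hr => hc.trans hr.1)
  have hright : ∀ c d, τ ≤ c → 0 ≤ c → c ≤ d →
      IntervalIntegrable (psiDeriv τ ρ xτ ψ) volume c d := fun c d hτc hc hcd => by
    rw [intervalIntegrable_iff_integrableOn_Ioc_of_le hcd]
    refine IntegrableOn.congr_fun ?_ (fun r hr => (if_neg (hτc.trans_lt hr.1).not_ge).symm)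
      measurableSet_Ioc
    exact ((h.1.mono fun r hr => hc.trans hr.1).integrableOn_Icc).mono_set Ioc_subset_Icc_self
  rcases le_total b τ with hb | hb
  · exact hleft a b ha hab hb
  rcases le_total τ a with hτa | hτa
  · exact hright a b hτa ha hab
  · exact (hleft a τ ha hτa le_rfl).trans (hright τ b le_rfl (ha.trans hτa) hb)

theorem integral_psiDeriv (h : IsPsiSol τ ρ xτ ψ) (hτ : 0 ≤ τ) (hxτ : Continuous xτ) {t : ℝ}
    (ht : 0 ≤ t) : ∫ r in 0..t, psiDeriv τ ρ xτ ψ r = ψ t := by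
  have hleft : ∀ t ∈ Icc 0 τ, ∫ r in 0..t, psiDeriv τ ρ xτ ψ r = ψ t := fun t ht => by
    rw [h.2.2.1 t ht]
    refine intervalIntegral.integral_congr fun r hr => if_pos ?_
    rw [uIcc_of_le ht.1] at hr
    exact hr.2.trans ht.2
  rcases le_total t τ with htτ | hτt
  · exact hleft t ⟨ht, htτ⟩
  have hright : ∫ r in τ..t, psiDeriv τ ρ xτ ψ r = ∫ r in τ..t, ψ r :=
    intervalIntegral.integral_congr_ae (ae_of_all _ fun r hr => by
      rw [uIoc_of_le hτt] at hr
      exact if_neg hr.1.not_ge)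
  rw [← intervalIntegral.integral_add_adjacent_intervals
    (h.intervalIntegrable_psiDeriv hxτ le_rfl hτ)
    (h.intervalIntegrable_psiDeriv hxτ hτ hτt), hleft τ ⟨hτ, le_rfl⟩, hright, h.2.2.2 t hτt]

theorem sub_eq_integral_psiDeriv (h : IsPsiSol τ ρ xτ ψ) (hτ : 0 ≤ τ) (hxτ : Continuous xτ)
    {a b : ℝ} (ha : 0 ≤ a) (hab : a ≤ b) : ψ b - ψ a = ∫ r in a..b, psiDeriv τ ρ xτ ψ r := by
  rw [← h.integral_psiDeriv hτ hxτ (ha.trans hab), ← h.integral_psiDeriv hτ hxτ ha,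
    intervalIntegral.integral_interval_sub_left
      (h.intervalIntegrable_psiDeriv hxτ le_rfl (ha.trans hab))
      (h.intervalIntegrable_psiDeriv hxτ le_rfl ha)]

variable (h : IsPsiSol τ ρ xτ ψ) (hτ : 0 ≤ τ) (hxτ : Continuous xτ)
  (hxρ : ∀ t ≤ ρ, 0 ≤ xτ t)
include h hτ hxτ hxρ

theorem nonneg {t : ℝ} (ht : 0 ≤ t) : 0 ≤ ψ t := by
  have hleft : ∀ t ∈ Icc 0 τ, 0 ≤ ψ t := fun t ht => by
    have hψt := h.sub_eq_integral_psiDeriv hτ hxτ le_rfl ht.1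
    rw [h.2.1, sub_zero] at hψt
    rw [hψt]
    refine intervalIntegral.integral_nonneg ht.1 fun r hr => ?_
    rw [psiDeriv, if_pos (hr.2.trans ht.2)]
    exact (hxρ _ (by linarith [hr.2, ht.2])).trans (le_max_left _ _)
  rcases le_total t τ with htτ | hτt
  · exact hleft t ⟨ht, htτ⟩
  have hψc : ContinuousOn ψ (Ici τ) := h.1.mono (Ici_subset_Ici.2 hτ)
  refine neg_nonpos.1 (nonpos_of_le_integral_of_majorant (E := fun t => -ψ t) hψc.neg ?_ t hτt)
  intro D hD _ hmaj t ht
  have hψint : IntervalIntegrable ψ volume τ t :=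
    (hψc.mono Icc_subset_Ici_self).intervalIntegrable_of_Icc ht
  calc -ψ t ≤ ∫ s in τ..t, -ψ s := by
        rw [h.2.2.2 t ht, intervalIntegral.integral_neg]
        linarith [hleft τ ⟨hτ, le_rfl⟩]
    _ ≤ ∫ s in τ..t, D s :=
        intervalIntegral.integral_mono_on ht hψint.neg
          (hD.mono (by rw [uIcc_of_le ht]; exact Icc_subset_Ici_self)).intervalIntegrable
          fun s hs => hmaj s hs.1 s ⟨hs.1, le_rfl⟩

theorem monotoneOn : MonotoneOn ψ (Ici 0) := fun a ha b _ hab => by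
  have hint : 0 ≤ ∫ r in a..b, psiDeriv τ ρ xτ ψ r :=
    intervalIntegral.integral_nonneg hab fun r hr =>
      (h.nonneg hτ hxτ hxρ (le_trans ha hr.1)).trans (le_psiDeriv τ ρ xτ ψ r)
  linarith [h.sub_eq_integral_psiDeriv hτ hxτ ha hab]

end IsPsiSol

/-- The backward bound `∫ s in v..t₁, F (s - τ)` truncated at `M`; through `min v t₁` it vanishes
after `t₁` (for `M ≥ 0`) instead of turning negative. -/
def backwardOp (τ t₁ M : ℝ) (F : ℝ → ℝ) (v : ℝ) : ℝ :=
  min M (∫ s in (min v t₁)..t₁, F (s - τ))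

section BackwardOp

variable {τ t₁ M : ℝ} {F G : ℝ → ℝ}

theorem intervalIntegrable_comp_sub_of_antitone (hF : Antitone F) (a b : ℝ) :
    IntervalIntegrable (fun s => F (s - τ)) volume a b :=
  (hF.comp_monotone fun _ _ h => sub_le_sub_right h τ).intervalIntegrable

theorem backwardOp_nonneg (hM : 0 ≤ M) (hF : ∀ v, 0 ≤ F v) (v : ℝ) :
    0 ≤ backwardOp τ t₁ M F v :=
  le_min hM (intervalIntegral.integral_nonneg (min_le_right _ _) fun _ _ => hF _)

theorem backwardOp_mono (hF : Antitone F) (hG : Antitone G) (hFG : ∀ v, F v ≤ G v) (v : ℝ) :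
    backwardOp τ t₁ M F v ≤ backwardOp τ t₁ M G v :=
  min_le_min_left M (intervalIntegral.integral_mono_on (min_le_right _ _)
    (intervalIntegrable_comp_sub_of_antitone hF _ _)
    (intervalIntegrable_comp_sub_of_antitone hG _ _) fun _ _ => hFG _)

theorem antitone_backwardOp (hF : Antitone F) (hF0 : ∀ v, 0 ≤ F v) :
    Antitone (backwardOp τ t₁ M F) := fun _ _ huv =>
  min_le_min_left M (intervalIntegral.integral_mono_interval (min_le_min_right t₁ huv)
    (min_le_right _ _) le_rfl (ae_of_all _ fun _ => hF0 _)
    (intervalIntegrable_comp_sub_of_antitone hF _ _))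

theorem exists_backwardOp_eq_self {K : Set ℝ} {ℓ : ℝ → ℝ} (hM : 0 ≤ M)
    (hℓM : ∀ v ∈ K, ℓ v ≤ M)
    (hℓ : ∀ F : ℝ → ℝ, Antitone F → (∀ v, 0 ≤ F v) → (∀ v ∈ K, ℓ v ≤ F v) →
      ∀ v ∈ K, ℓ v ≤ backwardOp τ t₁ M F v) :
    ∃ F : ℝ → ℝ, Antitone F ∧ (∀ v, 0 ≤ F v) ∧ (∀ v ∈ K, ℓ v ≤ F v) ∧
      backwardOp τ t₁ M F = F := by
  -- Knaster–Tarski: the infimum of all antitone supersolutions above `ℓ` is a fixed point.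
  set S : Set (ℝ → ℝ) := {F | Antitone F ∧ (∀ v, 0 ≤ F v) ∧ (∀ v ∈ K, ℓ v ≤ F v) ∧
    ∀ v, backwardOp τ t₁ M F v ≤ F v}
  have : Nonempty S :=
    ⟨⟨fun _ => M, antitone_const, fun _ => hM, hℓM, fun _ => min_le_left _ _⟩⟩
  set f : ℝ → ℝ := fun v => ⨅ F : S, (F : ℝ → ℝ) v
  have hbdd : ∀ v, BddBelow (range fun F : S => (F : ℝ → ℝ) v) := fun v =>
    ⟨0, by rintro _ ⟨F, rfl⟩; exact F.2.2.1 v⟩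
  have hfle : ∀ F ∈ S, ∀ v, f v ≤ F v := fun F hF v => ciInf_le (hbdd v) ⟨F, hF⟩
  have hf : Antitone f := fun u v huv => le_ciInf fun F => (hfle F F.2 v).trans (F.2.1 huv)
  have hf0 : ∀ v, 0 ≤ f v := fun v => le_ciInf fun F => F.2.2.1 v
  have hfℓ : ∀ v ∈ K, ℓ v ≤ f v := fun v hv => le_ciInf fun F => F.2.2.2.1 v hv
  have hTf : ∀ v, backwardOp τ t₁ M f v ≤ f v := fun v => le_ciInf fun F =>
    (backwardOp_mono hf F.2.1 (hfle F F.2) v).trans (F.2.2.2.2 v)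
  have hTfS : backwardOp τ t₁ M f ∈ S :=
    ⟨antitone_backwardOp hf hf0, backwardOp_nonneg hM hf0, hℓ f hf hf0 hfℓ,
      backwardOp_mono (antitone_backwardOp hf hf0) hf hTf⟩
  exact ⟨f, hf, hf0, hfℓ, funext fun v => (hTf v).antisymm (hfle _ hTfS v)⟩

theorem exists_breakpoint_of_backwardOp_eq_self (hM : 0 < M) (hF : Antitone F)
    (hF0 : ∀ v, 0 ≤ F v) (hfix : backwardOp τ t₁ M F = F) {c : ℝ} (hc : c ≤ t₁)
    (hFc : F c = M) :
    ∃ a ∈ Ico c t₁, EqOn F (fun _ => M) (Iic a) ∧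
      ∀ v ∈ Icc a t₁, F v = M - ∫ s in a..v, F (s - τ) := by
  have hint := intervalIntegrable_comp_sub_of_antitone (τ := τ) hF
  set G : ℝ → ℝ := fun v => ∫ s in v..t₁, F (s - τ) with hG
  have hFG : ∀ v ≤ t₁, F v = min M (G v) := fun v hv => by
    have := congrFun hfix v
    rwa [backwardOp, min_eq_left hv, eq_comm] at this
  have hGsub : ∀ u v, G u - G v = ∫ s in u..v, F (s - τ) := fun u v => by
    linarith [intervalIntegral.integral_add_adjacent_intervals (hint u v) (hint v t₁)]
  have hGanti : Antitone G := fun u v huv => by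
    linarith [hGsub u v, intervalIntegral.integral_nonneg (μ := volume) huv fun s _ => hF0 (s - τ)]
  have hGc : Continuous G := by
    rw [show G = fun v => -∫ s in t₁..v, F (s - τ) from
      funext fun v => intervalIntegral.integral_symm _ _]
    exact (intervalIntegral.continuous_primitive hint t₁).neg
  set A := {v | M ≤ G v}
  have hcA : c ∈ A := min_eq_left_iff.1 ((hFG c hc).symm.trans hFc)
  have hAt : ∀ v ∈ A, v < t₁ := fun v hv => by
    by_contra! h
    have : G v ≤ 0 := by simpa [hG] using hGanti h
    exact hM.not_ge ((show M ≤ G v from hv).trans this)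
  have hAbdd : BddAbove A := ⟨t₁, fun v hv => (hAt v hv).le⟩
  have haA : sSup A ∈ A := (isClosed_le continuous_const hGc).csSup_mem ⟨c, hcA⟩ hAbdd
  have hGlt : ∀ v, sSup A < v → G v < M := fun v hv =>
    not_le.1 fun h => (le_csSup hAbdd h).not_gt hv
  have hGa : G (sSup A) = M := le_antisymm
    (le_of_tendsto ((hGc.tendsto _).mono_left nhdsWithin_le_nhds)
      (eventually_nhdsWithin_of_forall (s := Ioi (sSup A)) fun v hv => (hGlt v hv).le)) haA
  refine ⟨sSup A, ⟨le_csSup hAbdd hcA, hAt _ haA⟩, fun v hv => ?_, fun v hv => ?_⟩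
  · rw [hFG v (le_trans hv (hAt _ haA).le)]
    exact min_eq_left (haA.trans (hGanti hv))
  · rw [hFG v hv.2, min_eq_right (hGa ▸ hGanti hv.1), ← hGa, ← hGsub]
    ring

theorem IsXSol.eqOn_mul_of_eq_sub_integral {xτ : ℝ → ℝ} (hxτ : IsXSol τ xτ) (hτ : 0 < τ)
    {a T : ℝ} (h₀ : EqOn F (fun _ => M) (Iic a))
    (hF : ∀ v ∈ Icc a T, F v = M - ∫ s in a..v, F (s - τ)) :
    EqOn F (fun v => M * xτ (v - a)) (Iic T) := by
  have hMx : EqOn (fun _ => M) (fun v => M * xτ (v - a)) (Iic a) := fun v hv => by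
    simp [hxτ.2.1 (v - a) (sub_nonpos.2 hv)]
  refine eqOn_Iic_of_delayed hτ (h₀.trans hMx) fun v hvT hv => ?_
  rcases le_total v a with hva | hav
  · exact h₀.trans hMx hva
  rw [hF v ⟨hav, hvT⟩, hxτ.mul_eq_sub_integral M a hav]
  congr 1
  refine intervalIntegral.integral_congr fun s hs => hv ?_
  rw [uIcc_of_le hav] at hs
  exact sub_le_sub_right hs.2 τ

theorem IsXSol.eqOn_of_backwardOp_eq_self {xτ : ℝ → ℝ} (hxτ : IsXSol τ xτ) (hτ : 0 < τ)
    (hM : 0 < M) (hF : Antitone F) (hF0 : ∀ v, 0 ≤ F v) (hfix : backwardOp τ t₁ M F = F)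
    (hFρ : F (t₁ - firstRoot xτ) = M) :
    EqOn F (fun v => M * xτ (v - (t₁ - firstRoot xτ))) (Icc (t₁ - firstRoot xτ) t₁) := by
  obtain ⟨a, ⟨hca, hat⟩, h₀, hFa⟩ := exists_breakpoint_of_backwardOp_eq_self hM hF hF0 hfix
    (sub_le_self _ (firstRoot_nonneg xτ)) hFρ
  have hFx := hxτ.eqOn_mul_of_eq_sub_integral hτ h₀ hFa
  have hroot : xτ (t₁ - a) = 0 := by
    have hFt₁ : F t₁ = 0 := by rw [← hfix]; simp [backwardOp, hM.le]
    have := hFx (le_refl t₁)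
    rw [hFt₁, eq_comm] at this
    exact (mul_eq_zero.1 this).resolve_left hM.ne'
  have ha : a = t₁ - firstRoot xτ :=
    le_antisymm (by linarith [firstRoot_le (sub_pos.2 hat) hroot]) hca
  subst ha
  exact fun v hv => hFx hv.2

theorem IsXSol.mul_le_backwardOp {xτ : ℝ → ℝ} (hxτ : IsXSol τ xτ) (hτ : 0 < τ)
    (hρ : 0 < firstRoot xτ) (hM : 0 ≤ M) (hF : Antitone F) (hF0 : ∀ v, 0 ≤ F v)
    (hbF : ∀ v ∈ Icc (t₁ - τ - firstRoot xτ) t₁, M * xτ (v - (t₁ - firstRoot xτ)) ≤ F v) :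
    ∀ v ∈ Icc (t₁ - τ - firstRoot xτ) t₁,
      M * xτ (v - (t₁ - firstRoot xτ)) ≤ backwardOp τ t₁ M F v := by
  set ρ := firstRoot xτ
  have hshift : ∀ v, ∫ s in v..t₁, xτ (s - τ - (t₁ - ρ)) = ∫ r in v - (t₁ - ρ)..ρ, xτ (r - τ) :=
    fun v => by
      simp_rw [sub_right_comm _ τ (t₁ - ρ)]
      rw [intervalIntegral.integral_comp_sub_right (fun r => xτ (r - τ)), sub_sub_cancel]
  have hright : ∀ v ∈ Icc (t₁ - ρ) t₁, M * xτ (v - (t₁ - ρ)) ≤ backwardOp τ t₁ M F v := by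
    intro v hv
    rw [backwardOp, min_eq_left hv.2]
    refine le_min (mul_le_of_le_one_right hM
      (hxτ.le_one_of_le_firstRoot hτ.le (by linarith [hv.2]))) ?_
    calc M * xτ (v - (t₁ - ρ)) ≤ M * ∫ r in v - (t₁ - ρ)..ρ, xτ (r - τ) :=
          mul_le_mul_of_nonneg_left
            (hxτ.le_integral_firstRoot hτ.le hρ (by linarith [hv.2])) hM
      _ = ∫ s in v..t₁, M * xτ (s - τ - (t₁ - ρ)) := by
          rw [intervalIntegral.integral_const_mul, hshift]
      _ ≤ ∫ s in v..t₁, F (s - τ) :=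
          intervalIntegral.integral_mono_on hv.2
            ((continuous_const.mul (hxτ.1.comp (by fun_prop))).intervalIntegrable _ _)
            (intervalIntegrable_comp_sub_of_antitone hF _ _) fun s hs =>
              hbF (s - τ) ⟨by linarith [hs.1, hv.1], by linarith [hs.2]⟩
  intro v hv
  rcases le_total (t₁ - ρ) v with hvρ | hvρ
  · exact hright v ⟨hvρ, hv.2⟩
  calc M * xτ (v - (t₁ - ρ)) = M * xτ ((t₁ - ρ) - (t₁ - ρ)) := by
        rw [hxτ.2.1 _ (by linarith), sub_self, hxτ.2.1 0 le_rfl]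
    _ ≤ backwardOp τ t₁ M F (t₁ - ρ) := hright _ ⟨le_rfl, by linarith⟩
    _ ≤ backwardOp τ t₁ M F v := antitone_backwardOp hF hF0 hvρ

end BackwardOp

/-- `|x'(t)| ≤ |x(τd t)|` on `[t₀, ∞)`, in integrated form. -/
def DelayIncrementBound (τd : ℝ → ℝ) (t₀ : ℝ) (x : ℝ → ℝ) : Prop :=
  ∀ a b, t₀ ≤ a → a ≤ b → ∀ g : ℝ → ℝ, IntervalIntegrable g volume a b →
    (∀ s ∈ Icc a b, |x (τd s)| ≤ g s) → |x b - x a| ≤ ∫ s in a..b, g s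

theorem IsDelaySolution.delayIncrementBound {p τd x : ℝ → ℝ} {t₀ τ : ℝ}
    (hx : IsDelaySolution p τd t₀ x) (hp : LocallyIntegrable p) (hτd : Measurable τd)
    (hτdle : ∀ t, τd t ≤ t) (hτdge : ∀ t ≥ t₀, t - τd t ≤ τ) (hp1 : ∀ᵐ t, |p t| = 1) :
    DelayIncrementBound τd t₀ x := by
  have hint : ∀ c d, t₀ ≤ c → c ≤ d →
      IntervalIntegrable (fun s => p s * x (τd s)) volume c d := by
    intro c d hc hcd
    obtain ⟨C, hC⟩ :=
      (isCompact_Icc (a := c - τ) (b := d)).exists_bound_of_continuousOn hx.1.continuousOn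
    rw [intervalIntegrable_iff_integrableOn_Icc_of_le hcd]
    refine (hp.integrableOn_isCompact isCompact_Icc).mul_bdd (c := C)
      (hx.1.measurable.comp hτd).aestronglyMeasurable ?_
    filter_upwards [ae_restrict_mem measurableSet_Icc] with s hs
    exact hC _ ⟨by linarith [hτdge s (hc.trans hs.1), hs.1], (hτdle s).trans hs.2⟩
  intro a b ha hab g hg hxg
  have heq : x b - x a = ∫ s in a..b, p s * x (τd s) := by
    rw [hx.2 b (ha.trans hab), hx.2 a ha, add_sub_add_left_eq_sub,
      intervalIntegral.integral_interval_sub_left (hint t₀ b le_rfl (ha.trans hab))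
        (hint t₀ a le_rfl ha)]
  rw [heq]
  refine (intervalIntegral.norm_integral_le_integral_norm hab).trans
    (intervalIntegral.integral_mono_ae_restrict hab (hint a b ha hab).norm hg ?_)
  filter_upwards [ae_restrict_of_ae hp1, ae_restrict_mem measurableSet_Icc] with s hps hs
  rw [norm_mul, Real.norm_eq_abs, Real.norm_eq_abs, hps, one_mul]
  exact hxg s hs

namespace DelayIncrementBound

variable {τd x xτ : ℝ → ℝ} {t₀ τ ρ t₁ M : ℝ}

theorem abs_le_backwardOp (hinc : DelayIncrementBound τd t₀ x) (hτdle : ∀ t, τd t ≤ t)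
    (hτdge : ∀ t ≥ t₀, t - τd t ≤ τ) {a : ℝ} (ha : t₀ ≤ a) (hzero : x t₁ = 0)
    (hxM : ∀ v ∈ Icc a t₁, |x v| ≤ M) {F : ℝ → ℝ} (hF : Antitone F)
    (hxF : ∀ v ∈ Icc (a - τ) t₁, |x v| ≤ F v) :
    ∀ v ∈ Icc a t₁, |x v| ≤ backwardOp τ t₁ M F v := by
  intro v hv
  rw [backwardOp, min_eq_left hv.2]
  refine le_min (hxM v hv) ?_
  have hbound := hinc v t₁ (ha.trans hv.1) hv.2 (fun s => F (s - τ))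
    (intervalIntegrable_comp_sub_of_antitone hF _ _) fun s hs => by
      have hsτ : s - τ ≤ τd s := by linarith [hτdge s (by linarith [hs.1, hv.1])]
      exact (hxF _ ⟨by linarith [hs.1, hv.1], (hτdle s).trans hs.2⟩).trans (hF hsτ)
  rwa [hzero, zero_sub, abs_neg] at hbound

theorem max_le_backwardOp (hinc : DelayIncrementBound τd t₀ x) (hτdle : ∀ t, τd t ≤ t)
    (hτdge : ∀ t ≥ t₀, t - τd t ≤ τ) (hxτ : IsXSol τ xτ) (hτ : 0 < τ) (hρ : ρ = firstRoot xτ)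
    (hρ0 : 0 < ρ) (ht₁ : t₀ + τ + ρ ≤ t₁) (hzero : x t₁ = 0) (hM : 0 ≤ M)
    (hxM : ∀ v ∈ Icc (t₁ - τ - ρ) t₁, |x v| ≤ M) {F : ℝ → ℝ} (hF : Antitone F)
    (hF0 : ∀ v, 0 ≤ F v)
    (hℓF : ∀ v ∈ Icc (t₁ - τ - ρ) t₁, max (M * xτ (v - (t₁ - ρ))) |x v| ≤ F v) :
    ∀ v ∈ Icc (t₁ - τ - ρ) t₁, max (M * xτ (v - (t₁ - ρ))) |x v| ≤ backwardOp τ t₁ M F v := by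
  subst hρ
  have hbT := hxτ.mul_le_backwardOp hτ hρ0 hM hF hF0 fun v hv =>
    (le_max_left _ _).trans (hℓF v hv)
  intro v hv
  refine max_le (hbT v hv) ?_
  rcases le_total v (t₁ - firstRoot xτ) with hvρ | hvρ
  · calc |x v| ≤ M := hxM v hv
      _ = M * xτ (v - (t₁ - firstRoot xτ)) := by rw [hxτ.2.1 _ (by linarith), mul_one]
      _ ≤ _ := hbT v hv
  refine hinc.abs_le_backwardOp hτdle hτdge (by linarith) hzero
    (fun w hw => hxM w ⟨by linarith [hw.1], hw.2⟩) hF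
    (fun w hw => (le_max_right _ _).trans (hℓF w ⟨by linarith [hw.1], hw.2⟩)) v ⟨hvρ, hv.2⟩

theorem abs_le_mul_xSol (hinc : DelayIncrementBound τd t₀ x) (hτdle : ∀ t, τd t ≤ t)
    (hτdge : ∀ t ≥ t₀, t - τd t ≤ τ) (hxτ : IsXSol τ xτ) (hτ : 0 < τ) (hρ : ρ = firstRoot xτ)
    (ht₁ : t₀ + τ + ρ ≤ t₁) (hzero : x t₁ = 0) (hM : 0 ≤ M)
    (hxM : ∀ v ∈ Icc (t₁ - τ - ρ) t₁, |x v| ≤ M) :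
    ∀ v ∈ Icc (t₁ - τ) t₁, |x v| ≤ M * xτ (ρ - (t₁ - v)) := by
  intro v hv
  have hρ0 : 0 ≤ ρ := hρ ▸ firstRoot_nonneg xτ
  have hxMv : |x v| ≤ M := hxM v ⟨by linarith [hv.1], hv.2⟩
  rcases le_or_gt v (t₁ - ρ) with hvρ | hvρ
  · rwa [hxτ.2.1 _ (by linarith), mul_one]
  rcases hM.eq_or_lt with rfl | hMpos
  · simpa using hxMv
  obtain ⟨F, hF, hF0, hℓF, hfix⟩ := exists_backwardOp_eq_self (τ := τ) (t₁ := t₁)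
    (K := Icc (t₁ - τ - ρ) t₁) (ℓ := fun w => max (M * xτ (w - (t₁ - ρ))) |x w|) hM
    (fun w hw => max_le (mul_le_of_le_one_right hM
      (hxτ.le_one_of_le_firstRoot hτ.le (by linarith [hw.2]))) (hxM w hw))
    fun F hF hF0 hℓF => hinc.max_le_backwardOp hτdle hτdge hxτ hτ hρ (by linarith [hv.2])
      ht₁ hzero hM hxM hF hF0 hℓF
  have hFρ : F (t₁ - ρ) = M := by
    refine le_antisymm (hfix ▸ min_le_left _ _) (le_trans ?_ (hℓF _ ⟨by linarith, by linarith⟩))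
    rw [sub_self, hxτ.2.1 0 le_rfl, mul_one]
    exact le_max_left _ _
  subst hρ
  calc |x v| ≤ F v := (le_max_right _ _).trans (hℓF v ⟨by linarith [hv.1], hv.2⟩)
    _ = M * xτ (v - (t₁ - firstRoot xτ)) :=
        hxτ.eqOn_of_backwardOp_eq_self hτ hMpos hF hF0 hfix hFρ ⟨hvρ.le, hv.2⟩
    _ = M * xτ (firstRoot xτ - (t₁ - v)) := by ring_nf

end DelayIncrementBound

theorem abs_comp_le_psiDeriv {τd x xτ ψ D : ℝ → ℝ} {t₀ τ ρ t₁ M : ℝ} (hτdle : ∀ t, τd t ≤ t)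
    (hτdge : ∀ t ≥ t₀, t - τd t ≤ τ) (hxτ : IsXSol τ xτ) (hτ : 0 ≤ τ) (hρ : ρ = firstRoot xτ)
    (hψ : IsPsiSol τ ρ xτ ψ) (ht₁ : t₀ ≤ t₁) (hM : 0 ≤ M)
    (hback : ∀ v ∈ Icc (t₁ - τ) t₁, |x v| ≤ M * xτ (ρ - (t₁ - v))) (hD0 : ∀ t, 0 ≤ D t)
    (hmaj : ∀ s ≥ t₁, ∀ u ∈ Icc t₁ s, |x u| - M * ψ (u - t₁) ≤ D s) {s : ℝ} (hs : t₁ ≤ s) :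
    |x (τd s)| ≤ M * psiDeriv τ ρ xτ ψ (s - t₁) + D s := by
  subst hρ
  have hsτ : s - τ ≤ τd s := by linarith [hτdge s (ht₁.trans hs)]
  rcases le_total (τd s) t₁ with hle | hlt
  · have hst : s - t₁ ≤ τ := by linarith
    calc |x (τd s)| ≤ M * xτ (firstRoot xτ - (t₁ - τd s)) := hback _ ⟨by linarith, hle⟩
      _ ≤ M * xτ (firstRoot xτ + (s - t₁) - τ) :=
          mul_le_mul_of_nonneg_left (hxτ.antitoneOn_Iic_firstRoot hτ
            (mem_Iic.2 (by linarith)) (mem_Iic.2 (by linarith)) (by linarith)) hM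
      _ ≤ M * psiDeriv τ (firstRoot xτ) xτ ψ (s - t₁) := by
          rw [psiDeriv, if_pos hst]
          exact mul_le_mul_of_nonneg_left (le_max_left _ _) hM
      _ ≤ _ := le_add_of_nonneg_right (hD0 s)
  · have hψle : ψ (τd s - t₁) ≤ psiDeriv τ (firstRoot xτ) xτ ψ (s - t₁) :=
      (hψ.monotoneOn hτ hxτ.1 (fun t ht => hxτ.nonneg_of_le_firstRoot ht) (sub_nonneg.2 hlt)
        (sub_nonneg.2 hs) (by linarith [hτdle s])).trans (le_psiDeriv _ _ _ _ _)
    linarith [hmaj s hs (τd s) ⟨hlt, hτdle s⟩, mul_le_mul_of_nonneg_left hψle hM]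

theorem DelayIncrementBound.abs_le_mul_psi {τd x xτ ψ : ℝ → ℝ} {t₀ τ ρ t₁ M : ℝ}
    (hinc : DelayIncrementBound τd t₀ x) (hxc : Continuous x) (hτdle : ∀ t, τd t ≤ t)
    (hτdge : ∀ t ≥ t₀, t - τd t ≤ τ) (hxτ : IsXSol τ xτ) (hτ : 0 ≤ τ) (hρ : ρ = firstRoot xτ)
    (hψ : IsPsiSol τ ρ xτ ψ) (ht₁ : t₀ ≤ t₁) (hzero : x t₁ = 0) (hM : 0 ≤ M)
    (hback : ∀ v ∈ Icc (t₁ - τ) t₁, |x v| ≤ M * xτ (ρ - (t₁ - v))) :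
    ∀ t ≥ t₁, |x t| ≤ M * ψ (t - t₁) := by
  have hψc : ContinuousOn (fun u => ψ (u - t₁)) (Ici t₁) :=
    hψ.1.comp (continuous_sub_right t₁).continuousOn fun u hu => mem_Ici.2 (sub_nonneg.2 hu)
  refine fun t ht => sub_nonpos.1 (nonpos_of_le_integral_of_majorant
    (E := fun u => |x u| - M * ψ (u - t₁)) (hxc.abs.continuousOn.sub (hψc.const_smul M))
    (fun D hD hD0 hmaj t ht => ?_) t ht)
  have hDint : IntervalIntegrable D volume t₁ t :=
    (hD.mono (by rw [uIcc_of_le ht]; exact Icc_subset_Ici_self)).intervalIntegrable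
  have hψ'int : IntervalIntegrable (fun s => psiDeriv τ ρ xτ ψ (s - t₁)) volume t₁ t := by
    simpa using (hψ.intervalIntegrable_psiDeriv hxτ.1 le_rfl (sub_nonneg.2 ht)).comp_sub_right t₁
  have hbound := hinc t₁ t ht₁ ht _ ((hψ'int.const_mul M).add hDint) fun s hs =>
    abs_comp_le_psiDeriv hτdle hτdge hxτ hτ hρ hψ ht₁ hM hback hD0 hmaj hs.1
  rw [hzero, sub_zero, intervalIntegral.integral_add (hψ'int.const_mul M) hDint,
    intervalIntegral.integral_const_mul, intervalIntegral.integral_comp_sub_right, sub_self,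
    hψ.integral_psiDeriv hτ hxτ.1 (sub_nonneg.2 ht)] at hbound
  linarith

theorem stmt10_general (p τd : ℝ → ℝ)
    (hploc : MeasureTheory.LocallyIntegrable p)
    (hτdm : Measurable τd) (hτdle : ∀ t, τd t ≤ t)
    (t₀ : ℝ) (x : ℝ → ℝ) (hx : IsDelaySolution p τd t₀ x)
    (hp1 : ∀ᵐ t : ℝ ∂volume, |p t| = 1)
    (τm : ℝ) (hτm : IsLUB {y : ℝ | ∃ t ≥ t₀, y = t - τd t} τm)
    (hτmI : τm ∈ Ioc (1 / Real.exp 1) 2)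
    (xτ : ℝ → ℝ) (hxτ : IsXSol τm xτ) (ρ : ℝ) (hρ : ρ = firstRoot xτ)
    (ψ : ℝ → ℝ) (hψ : IsPsiSol τm ρ xτ ψ)
    (t₁ : ℝ) (ht₁ : t₀ + τm + ρ ≤ t₁) (hzero : x t₁ = 0)
    (M₀ : ℝ) (hM₀ : M₀ = sSup ((fun v => |x v|) '' Icc (t₁ - τm - ρ) t₁)) :
    (∀ t ≥ t₁, |x t| ≤ M₀ * ψ (t - t₁)) ∧
    (∀ t ∈ Icc (t₁ - τm) t₁, |x t| ≤ M₀ * xτ (ρ - (t₁ - t))) := by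
  have hτ : 0 < τm := lt_trans (by positivity) hτmI.1
  have hρ0 : 0 ≤ ρ := hρ ▸ firstRoot_nonneg xτ
  have hτdge : ∀ t ≥ t₀, t - τd t ≤ τm := fun t ht => hτm.1 ⟨t, ht, rfl⟩
  have hinc := hx.delayIncrementBound hploc hτdm hτdle hτdge hp1
  have hxM : ∀ v ∈ Icc (t₁ - τm - ρ) t₁, |x v| ≤ M₀ := fun v hv =>
    hM₀ ▸ le_csSup (isCompact_Icc.bddAbove_image hx.1.abs.continuousOn) ⟨v, hv, rfl⟩
  have hM : 0 ≤ M₀ := (abs_nonneg _).trans (hxM t₁ ⟨by linarith, le_rfl⟩)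
  have hback := hinc.abs_le_mul_xSol hτdle hτdge hxτ hτ hρ ht₁ hzero hM hxM
  exact ⟨hinc.abs_le_mul_psi hx.1 hτdle hτdge hxτ hτ.le hρ hψ (by linarith) hzero hM hback,
    hback⟩

theorem stmt10 (p τd : ℝ → ℝ) (hpm : Measurable p)
    (hploc : MeasureTheory.LocallyIntegrable p)
    (hτdm : Measurable τd) (hτdle : ∀ t, τd t ≤ t)
    (hτdinf : Filter.Tendsto τd Filter.atTop Filter.atTop)
    (t₀ : ℝ) (x : ℝ → ℝ) (hx : IsDelaySolution p τd t₀ x)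
    (hosc : Oscillatory x)
    (hp1 : ∀ᵐ t : ℝ ∂volume, |p t| = 1)
    (τm : ℝ) (hτm : IsLUB {y : ℝ | ∃ t ≥ t₀, y = t - τd t} τm)
    (hτmI : τm ∈ Ioc (1 / Real.exp 1) 2)
    (xτ : ℝ → ℝ) (hxτ : IsXSol τm xτ) (ρ : ℝ) (hρ : ρ = firstRoot xτ)
    (ψ : ℝ → ℝ) (hψ : IsPsiSol τm ρ xτ ψ)
    (t₁ : ℝ) (ht₁ : t₀ + τm + ρ ≤ t₁) (hzero : x t₁ = 0)
    (M₀ : ℝ) (hM₀ : M₀ = sSup ((fun v => |x v|) '' Icc (t₁ - τm - ρ) t₁)) :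
    (∀ t ≥ t₁, |x t| ≤ M₀ * ψ (t - t₁)) ∧
    (∀ t ∈ Icc (t₁ - τm) t₁, |x t| ≤ M₀ * xτ (ρ - (t₁ - t))) :=
  stmt10_general p τd hploc hτdm hτdle t₀ x hx hp1 τm hτm hτmI xτ hxτ ρ hρ ψ hψ t₁ ht₁ hzero M₀ hM₀
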